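/- arXiv:2602.22552 — 3 statements merged into one kernel-verified Lean document; each statement's English description precedes it below -/
import Mathlib

section
/- Let φmax(s; γ) := log( max(exp(γ + s), 1) / max(exp s, exp γ) ). Then for all real s and γ: (i) gate-off: if γ = 0 then φmax(s; 0) = 0; (ii) flip: if γ < 0 then φmax(s; γ) = −φmax(s; |γ|); (iii) linear region: if |s| ≤ γ then φmax(s; γ) = s. -/
/-- The per-neighbor joint-MAP message. -/
noncomputable def phimax (s γ : ℝ) : ℝ :=
  Real.log (max (Real.exp (γ + s)) 1 / max (Real.exp s) (Real.exp γ))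

lemma phimax_eq (s γ : ℝ) : phimax s γ = max (γ + s) 0 - max s γ := by
  unfold phimax
  rw [show max (Real.exp (γ + s)) 1 = Real.exp (max (γ + s) 0) by
        rw [← Real.exp_zero]; exact (Real.exp_monotone.map_max).symm,
      show max (Real.exp s) (Real.exp γ) = Real.exp (max s γ) from
        (Real.exp_monotone.map_max).symm,
      ← Real.exp_sub, Real.log_exp]

theorem stmt1 (s γ : ℝ) :
    (γ = 0 → phimax s 0 = 0) ∧
    (γ < 0 → phimax s γ = -(phimax s |γ|)) ∧
    (|s| ≤ γ → phimax s γ = s) := by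
  refine ⟨fun _ => ?_, fun h => ?_, fun h => ?_⟩
  · rw [phimax_eq]; simp
  · rw [phimax_eq, phimax_eq, abs_of_neg h]
    rcases le_total (γ + s) 0 with h1 | h1 <;> rcases le_total s γ with h2 | h2 <;>
      simp [max_def] <;> split_ifs <;> linarith
  · rw [phimax_eq]
    rw [abs_le] at h
    rw [max_eq_left (by linarith), max_eq_right (by linarith)]
    ring
end

section
/- Let M be a finite nonempty set, d : M → ℝ with d_m > 0 for all m, α : M → ℝ, and δ ≠ 0, σ > 0, Λ > 0. Define ρ_lin(M) := (Σ_{m∈M} d_m α_m δ)² / (Λ·σ²·Σ_{m∈M} d_m). Then ρ_lin(M) = (δ²/(Λσ²)) · (Σ_{m∈M} d_m α_m)² / (Σ_{m∈M} d_m); and if M is enlarged to M ∪ {m₀} by a new metapath m₀ with α_{m₀} = 0 and d_{m₀} > 0, and Σ_{m∈M} d_m α_m ≠ 0, then ρ_lin(M ∪ {m₀}) < ρ_lin(M) strictly, while the gated message for m₀ vanishes identically since φmax(s; 0) = 0 for all s. -/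
/-- The linear (DFS-style) signal-to-noise ratio proxy. -/
noncomputable def rhoLin {ι : Type*} (d α : ι → ℝ) (δ Λ σ : ℝ) (S : Finset ι) : ℝ :=
  (∑ m ∈ S, d m * α m * δ) ^ 2 / (Λ * σ ^ 2 * ∑ m ∈ S, d m)

theorem stmt9 {ι : Type*} [DecidableEq ι] (M : Finset ι) (hM : M.Nonempty)
    (d α : ι → ℝ) (δ σ Λ : ℝ) (hδ : δ ≠ 0) (hσ : 0 < σ) (hΛ : 0 < Λ)
    (hd : ∀ m ∈ M, 0 < d m)
    (m₀ : ι) (hm₀ : m₀ ∉ M) (hα₀ : α m₀ = 0) (hd₀ : 0 < d m₀)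
    (hsum : ∑ m ∈ M, d m * α m ≠ 0) :
    rhoLin d α δ Λ σ M =
      δ ^ 2 / (Λ * σ ^ 2) * (∑ m ∈ M, d m * α m) ^ 2 / (∑ m ∈ M, d m) ∧
    rhoLin d α δ Λ σ (insert m₀ M) < rhoLin d α δ Λ σ M ∧
    ∀ s : ℝ, phimax s 0 = 0 := by
  have hS : 0 < ∑ m ∈ M, d m := Finset.sum_pos hd hM
  have hnum : ∀ T : Finset ι, ∑ m ∈ T, d m * α m * δ = (∑ m ∈ T, d m * α m) * δ := by
    intro T; rw [Finset.sum_mul]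
  have hC : 0 < Λ * σ ^ 2 := by positivity
  refine ⟨?_, ?_, ?_⟩
  · rw [rhoLin, hnum, mul_pow]
    field_simp
  · rw [rhoLin, rhoLin, hnum, hnum,
      Finset.sum_insert hm₀, Finset.sum_insert hm₀, hα₀]
    have hN : 0 < ((∑ m ∈ M, d m * α m) * δ) ^ 2 := by
      positivity
    rw [mul_zero, zero_add]
    apply div_lt_div_of_pos_left hN (by positivity)
    have : Λ * σ ^ 2 * ∑ m ∈ M, d m < Λ * σ ^ 2 * (d m₀ + ∑ m ∈ M, d m) := by
      apply mul_lt_mul_of_pos_left _ hC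
      linarith
    linarith
  · intro s
    unfold phimax
    rcases le_total s 0 with h | h
    · have h1 : Real.exp (0 + s) ≤ 1 := by
        rw [zero_add]; exact Real.exp_le_one_iff.mpr h
      have h2 : Real.exp s ≤ Real.exp 0 := Real.exp_le_exp.mpr h
      rw [max_eq_right h1, max_eq_right h2, Real.exp_zero, div_one, Real.log_one]
    · have h1 : 1 ≤ Real.exp (0 + s) := by
        rw [zero_add]; exact Real.one_le_exp h
      have h2 : Real.exp 0 ≤ Real.exp s := Real.exp_le_exp.mpr h
      rw [max_eq_left h1, max_eq_left h2, zero_add, div_self (Real.exp_ne_zero s),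
        Real.log_one]
end

section
/- Let (Ω, P) be a probability space, X a type of edge contexts, T ≥ 1, d ≥ 1, and for each k ∈ {1,…,d} and ℓ ∈ {1,…,T} let g_k^(ℓ) : Ω → (X → ℝ) be random functions such that the whole doubly-indexed family is independent, each g_k^(ℓ)(x) is bounded with mean zero, and E[g_k^(ℓ)(x)·g_k^(ℓ)(x′)] = κ(x, x′) for a fixed kernel κ. Let 𝒫_L(s) and 𝒫_L(s′) be finite sets of length-L paths represented as tuples (e₁,…,e_L) of contexts in X, with endpoint weights β assigning a real number to each path, and let a_L ∈ ℝ. Define z_k(s) := Σ_{L=1}^{T} a_L Σ_{p∈𝒫_L(s)} (∏_{ℓ=1}^{L} g_k^(ℓ)(e_ℓ(p)))·β(p) and K_d(s, s′) := (1/d)·Σ_{k=1}^{d} z_k(s)·z_k(s′). Then E[K_d(s, s′)] = Σ_{L=1}^{T} a_L² Σ_{p∈𝒫_L(s)} Σ_{q∈𝒫_L(s′)} (∏_{ℓ=1}^{L} κ(e_ℓ(p), f_ℓ(q)))·β(p)·β(q), where p = (e₁,…,e_L) and q = (f₁,…,f_L). -/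
open MeasureTheory ProbabilityTheory

/-!
Expanding both features, `E[z_k(s) z_k(s')]` is a double sum, over pairs of paths, of the
expectations `E[∏ g^(ℓ)(e_ℓ) · ∏ g^(ℓ)(f_ℓ)]`. Padding a path of length `L < T` with `none`
(standing for the constant message `1`) on the layers `L+1, …, T` turns such a product into a
product over layers of independent factors, so its expectation is the product over layers of
`optionKernel κ`: `κ` where both paths have an edge, `1` where neither has one, and `0` (the
messages are centred) where exactly one has. Thus pairs of different lengths contribute nothing,
pairs of equal length contribute `∏ κ(e_ℓ, f_ℓ)`, and all `d` coordinates have the same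
expectation.
-/

/-- The frozen-NBFNet random feature of a source node: the `k`-th coordinate aggregates,
over all typed paths out of the source (given as tuples of edge contexts), the product of
the layer-wise random messages, weighted by length weights `a` and endpoint weights `β`. -/
noncomputable def zfeat {Ω X : Type*} (g : ℕ → ℕ → Ω → X → ℝ) (a : ℕ → ℝ) (T : ℕ)
    (paths : (L : ℕ) → Finset (Fin L → X)) (β : (L : ℕ) → (Fin L → X) → ℝ)
    (k : ℕ) (ω : Ω) : ℝ :=
  ∑ L ∈ Finset.Icc 1 T, a L *
    ∑ p ∈ paths L, (∏ i : Fin L, g k (i.1 + 1) ω (p i)) * β L p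

open Finset
open scoped ENNReal

section Paths

variable {Ω X : Type*} {T : ℕ}

def pathAt {L : ℕ} (p : Fin L → X) (t : ℕ) : Option X :=
  if h : t < L then some (p ⟨t, h⟩) else none

def pathProd (Z : ℕ → Ω → X → ℝ) {L : ℕ} (p : Fin L → X) (ω : Ω) : ℝ :=
  ∏ i : Fin L, Z (i.1 + 1) ω (p i)

def optionKernel (κ : X → X → ℝ) : Option X → Option X → ℝ
  | some x, some y => κ x y
  | none, none => 1
  | _, _ => 0

theorem zfeat_eq_sum_pathProd (g : ℕ → ℕ → Ω → X → ℝ) (a : ℕ → ℝ) (T : ℕ)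
    (paths : (L : ℕ) → Finset (Fin L → X)) (β : (L : ℕ) → (Fin L → X) → ℝ) (k : ℕ) (ω : Ω) :
    zfeat g a T paths β k ω = ∑ L ∈ Icc 1 T, a L * ∑ p ∈ paths L, pathProd (g k) p ω * β L p :=
  rfl

theorem prod_eq_prod_elim_pathAt {M : Type*} [CommMonoid M] (f : Fin T → X → M) {L : ℕ}
    (hL : L ≤ T) (p : Fin L → X) :
    ∏ i : Fin L, f (Fin.castLE hL i) (p i) = ∏ t : Fin T, (pathAt p t).elim 1 (f t) :=
  Fintype.prod_of_injective _ (Fin.castLE_injective hL) _ _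
    (fun t ht => by rw [pathAt, dif_neg fun h => ht ⟨⟨t, h⟩, rfl⟩]; rfl)
    (fun i => by simp [pathAt])

theorem prod_optionKernel_pathAt_self (κ : X → X → ℝ) {L : ℕ} (hL : L ≤ T) (p q : Fin L → X) :
    ∏ t : Fin T, optionKernel κ (pathAt p t) (pathAt q t) = ∏ i, κ (p i) (q i) :=
  (Fintype.prod_of_injective _ (Fin.castLE_injective hL) _ _
    (fun t ht => by simp only [pathAt, dif_neg fun h => ht ⟨⟨t, h⟩, rfl⟩, optionKernel])
    (fun i => by simp [pathAt, optionKernel])).symm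

theorem prod_optionKernel_pathAt_of_ne (κ : X → X → ℝ) {L L' : ℕ} (hL : L ≤ T) (hL' : L' ≤ T)
    (hne : L ≠ L') (p : Fin L → X) (q : Fin L' → X) :
    ∏ t : Fin T, optionKernel κ (pathAt p t) (pathAt q t) = 0 := by
  refine prod_eq_zero (mem_univ ⟨min L L', by omega⟩) ?_
  rcases hne.lt_or_gt with h | h <;> simp [pathAt, optionKernel, h, h.not_gt]

theorem measurable_option_elim (u : Option X) : Measurable fun h : X → ℝ => u.elim 1 h := by
  cases u
  · exact measurable_const
  · exact measurable_pi_apply _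

end Paths

section Messages

variable {Ω X ι : Type*} [MeasurableSpace Ω] {T : ℕ}

structure IsIndepCenteredMessages (P : Measure Ω) (Z : ι → Ω → X → ℝ) (κ : X → X → ℝ) :
    Prop where
  measurable : ∀ i x, Measurable fun ω => Z i ω x
  iIndepFun : iIndepFun Z P
  memLp_top : ∀ i x, MemLp (fun ω => Z i ω x) ∞ P
  integral_eq_zero : ∀ i x, ∫ ω, Z i ω x ∂P = 0
  integral_mul_eq : ∀ i x x', ∫ ω, Z i ω x * Z i ω x' ∂P = κ x x'

theorem integral_sum_mul_sum {μ : Measure Ω} [IsFiniteMeasure μ] {ι' : Type*} {s : Finset ι}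
    {s' : Finset ι'} {F : ι → Ω → ℝ} {G : ι' → Ω → ℝ} (hF : ∀ i ∈ s, MemLp (F i) ∞ μ)
    (hG : ∀ j ∈ s', MemLp (G j) ∞ μ) :
    ∫ ω, (∑ i ∈ s, F i ω) * (∑ j ∈ s', G j ω) ∂μ = ∑ i ∈ s, ∑ j ∈ s', ∫ ω, F i ω * G j ω ∂μ := by
  have hint : ∀ i ∈ s, ∀ j ∈ s', Integrable (fun ω => F i ω * G j ω) μ :=
    fun i hi j hj => ((hG j hj).mul (hF i hi)).integrable le_top
  simp_rw [sum_mul_sum]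
  rw [integral_finsetSum _ fun i hi => integrable_finsetSum _ (hint i hi)]
  exact sum_congr rfl fun i hi => integral_finsetSum _ (hint i hi)

theorem memLp_top_pathProd {μ : Measure Ω} {Z : ℕ → Ω → X → ℝ}
    (hZ : ∀ t : Fin T, ∀ x, MemLp (fun ω => Z (t.1 + 1) ω x) ∞ μ) {L : ℕ} (hL : L ≤ T)
    (p : Fin L → X) : MemLp (pathProd Z p) ∞ μ := by
  unfold pathProd
  simpa using MemLp.prod' (s := univ) (p := fun _ => ∞) fun i _ => hZ (Fin.castLE hL i) (p i)

theorem memLp_top_sum_pathProd_mul {μ : Measure Ω} {Z : ℕ → Ω → X → ℝ}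
    (hZ : ∀ t : Fin T, ∀ x, MemLp (fun ω => Z (t.1 + 1) ω x) ∞ μ) {L : ℕ} (hL : L ≤ T)
    (s : Finset (Fin L → X)) (b : (Fin L → X) → ℝ) :
    MemLp (fun ω => ∑ p ∈ s, pathProd Z p ω * b p) ∞ μ :=
  memLp_finsetSum _ fun p _ => (memLp_top_pathProd hZ hL p).mul_const _

theorem memLp_top_zfeat {μ : Measure Ω} {g : ℕ → ℕ → Ω → X → ℝ} {k : ℕ}
    (hZ : ∀ t : Fin T, ∀ x, MemLp (fun ω => g k (t.1 + 1) ω x) ∞ μ) (a : ℕ → ℝ)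
    (paths : (L : ℕ) → Finset (Fin L → X)) (β : (L : ℕ) → (Fin L → X) → ℝ) :
    MemLp (zfeat g a T paths β k) ∞ μ := by
  simp_rw [funext (zfeat_eq_sum_pathProd g a T paths β k)]
  exact memLp_finsetSum _ fun L hL =>
    (memLp_top_sum_pathProd_mul hZ (mem_Icc.1 hL).2 _ _).const_mul _

theorem integral_sum_pathProd_mul_sum_pathProd {μ : Measure Ω} [IsFiniteMeasure μ]
    {Z : ℕ → Ω → X → ℝ} (hZ : ∀ t : Fin T, ∀ x, MemLp (fun ω => Z (t.1 + 1) ω x) ∞ μ)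
    {L L' : ℕ} (hL : L ≤ T) (hL' : L' ≤ T) (s : Finset (Fin L → X)) (s' : Finset (Fin L' → X))
    (b : (Fin L → X) → ℝ) (b' : (Fin L' → X) → ℝ) :
    ∫ ω, (∑ p ∈ s, pathProd Z p ω * b p) * (∑ q ∈ s', pathProd Z q ω * b' q) ∂μ =
      ∑ p ∈ s, ∑ q ∈ s', (∫ ω, pathProd Z p ω * pathProd Z q ω ∂μ) * b p * b' q := by
  rw [integral_sum_mul_sum (fun p _ => (memLp_top_pathProd hZ hL p).mul_const _)
    (fun q _ => (memLp_top_pathProd hZ hL' q).mul_const _)]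
  refine sum_congr rfl fun p _ => sum_congr rfl fun q _ => ?_
  simp_rw [mul_mul_mul_comm _ (b p)]
  rw [integral_mul_const, mul_assoc]

namespace IsIndepCenteredMessages

variable {P : Measure Ω} [IsProbabilityMeasure P] {κ : X → X → ℝ}

theorem integral_elim_mul_elim {Z : ι → Ω → X → ℝ} (hZ : IsIndepCenteredMessages P Z κ) (i : ι)
    (u v : Option X) :
    ∫ ω, u.elim 1 (Z i ω) * v.elim 1 (Z i ω) ∂P = optionKernel κ u v := by
  cases u <;> cases v <;> simp [optionKernel, hZ.integral_eq_zero, hZ.integral_mul_eq]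

theorem integral_pathProd_mul_pathProd {Z : ℕ → Ω → X → ℝ}
    (hZ : IsIndepCenteredMessages P (fun t : Fin T => Z (t.1 + 1)) κ) {L L' : ℕ}
    (hL : L ≤ T) (hL' : L' ≤ T) (p : Fin L → X) (q : Fin L' → X) :
    ∫ ω, pathProd Z p ω * pathProd Z q ω ∂P =
      ∏ t : Fin T, optionKernel κ (pathAt p t) (pathAt q t) := by
  have hprod : ∀ ω, pathProd Z p ω * pathProd Z q ω =
      ∏ t : Fin T, (pathAt p t).elim 1 (Z (t.1 + 1) ω) * (pathAt q t).elim 1 (Z (t.1 + 1) ω) := by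
    intro ω
    rw [prod_mul_distrib, ← prod_eq_prod_elim_pathAt (fun t : Fin T => Z (t.1 + 1) ω) hL p,
      ← prod_eq_prod_elim_pathAt (fun t : Fin T => Z (t.1 + 1) ω) hL' q]
    rfl
  simp_rw [hprod]
  rw [← prod_congr rfl fun t _ => hZ.integral_elim_mul_elim t (pathAt p t) (pathAt q t)]
  exact hZ.iIndepFun.integral_fun_prod_comp
    (f := fun (t : Fin T) h => (pathAt p t).elim 1 h * (pathAt q t).elim 1 h)
    (fun t => (measurable_pi_iff.mpr (hZ.measurable t)).aemeasurable)
    (fun _ => ((measurable_option_elim _).mul (measurable_option_elim _)).aestronglyMeasurable)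

theorem integral_zfeat_mul_zfeat {g : ℕ → ℕ → Ω → X → ℝ} {k : ℕ}
    (hZ : IsIndepCenteredMessages P (fun t : Fin T => g k (t.1 + 1)) κ) (a : ℕ → ℝ)
    (Ppaths Qpaths : (L : ℕ) → Finset (Fin L → X)) (βP βQ : (L : ℕ) → (Fin L → X) → ℝ) :
    ∫ ω, zfeat g a T Ppaths βP k ω * zfeat g a T Qpaths βQ k ω ∂P =
      ∑ L ∈ Icc 1 T, a L ^ 2 *
        ∑ p ∈ Ppaths L, ∑ q ∈ Qpaths L, (∏ i : Fin L, κ (p i) (q i)) * βP L p * βQ L q := by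
  have hS (paths : (L : ℕ) → Finset (Fin L → X)) (β : (L : ℕ) → (Fin L → X) → ℝ) (L : ℕ)
      (hL : L ∈ Icc 1 T) :=
    (memLp_top_sum_pathProd_mul hZ.memLp_top (mem_Icc.1 hL).2 (paths L) (β L)).const_mul (a L)
  simp_rw [zfeat_eq_sum_pathProd]
  rw [integral_sum_mul_sum (hS Ppaths βP) (hS Qpaths βQ)]
  refine sum_congr rfl fun L hL => ?_
  have hLT := (mem_Icc.1 hL).2
  simp_rw [mul_mul_mul_comm (a L), integral_const_mul]
  rw [sum_eq_single_of_mem L hL fun L' hL' hne => ?_]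
  · simp_rw [integral_sum_pathProd_mul_sum_pathProd hZ.memLp_top hLT hLT,
      hZ.integral_pathProd_mul_pathProd hLT hLT, prod_optionKernel_pathAt_self κ hLT, sq]
  · have hL'T := (mem_Icc.1 hL').2
    simp_rw [integral_sum_pathProd_mul_sum_pathProd hZ.memLp_top hLT hL'T,
      hZ.integral_pathProd_mul_pathProd hLT hL'T,
      prod_optionKernel_pathAt_of_ne κ hLT hL'T hne.symm]
    simp

end IsIndepCenteredMessages

end Messages

theorem stmt14_general {Ω X : Type*} [MeasurableSpace Ω] (P : Measure Ω) [IsProbabilityMeasure P]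
    (T d : ℕ) (hd : 1 ≤ d)
    (g : ℕ → ℕ → Ω → X → ℝ) (κ : X → X → ℝ)
    (hmeas : ∀ k ∈ Finset.Icc 1 d, ∀ ℓ ∈ Finset.Icc 1 T, ∀ x : X,
      Measurable fun ω => g k ℓ ω x)
    (hindep : iIndepFun
      (fun i : Fin d × Fin T => g (i.1.1 + 1) (i.2.1 + 1)) P)
    (hbdd : ∀ k ∈ Finset.Icc 1 d, ∀ ℓ ∈ Finset.Icc 1 T, ∀ x : X,
      ∃ C : ℝ, ∀ ω, |g k ℓ ω x| ≤ C)
    (hmean : ∀ k ∈ Finset.Icc 1 d, ∀ ℓ ∈ Finset.Icc 1 T, ∀ x : X,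
      ∫ ω, g k ℓ ω x ∂P = 0)
    (hker : ∀ k ∈ Finset.Icc 1 d, ∀ ℓ ∈ Finset.Icc 1 T, ∀ x x' : X,
      ∫ ω, g k ℓ ω x * g k ℓ ω x' ∂P = κ x x')
    (Ppaths Qpaths : (L : ℕ) → Finset (Fin L → X))
    (βP βQ : (L : ℕ) → (Fin L → X) → ℝ) (a : ℕ → ℝ) :
    ∫ ω, (1 / (d : ℝ)) * ∑ k ∈ Finset.Icc 1 d,
        zfeat g a T Ppaths βP k ω * zfeat g a T Qpaths βQ k ω ∂P =
      ∑ L ∈ Finset.Icc 1 T, a L ^ 2 *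
        ∑ p ∈ Ppaths L, ∑ q ∈ Qpaths L,
          (∏ i : Fin L, κ (p i) (q i)) * βP L p * βQ L q := by
  have hlayer (k : ℕ) (hk : k ∈ Icc 1 d) :
      IsIndepCenteredMessages P (fun t : Fin T => g k (t.1 + 1)) κ := by
    obtain ⟨j, rfl⟩ : ∃ j : Fin d, k = j.1 + 1 := ⟨⟨k - 1, by grind⟩, by grind⟩
    have hℓ (t : Fin T) : t.1 + 1 ∈ Icc 1 T := mem_Icc.2 ⟨by omega, t.2⟩
    have hmemLp (t : Fin T) (x : X) : MemLp (fun ω => g (j.1 + 1) (t.1 + 1) ω x) ∞ P := by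
      obtain ⟨C, hC⟩ := hbdd _ hk _ (hℓ t) x
      exact memLp_top_of_bound (hmeas _ hk _ (hℓ t) x).aestronglyMeasurable C
        (ae_of_all _ fun ω => (Real.norm_eq_abs _).trans_le (hC ω))
    exact
      { measurable := fun t => hmeas _ hk _ (hℓ t)
        iIndepFun := hindep.precomp (g := fun t : Fin T => (j, t)) fun _ _ h => (Prod.ext_iff.1 h).2
        memLp_top := hmemLp
        integral_eq_zero := fun t => hmean _ hk _ (hℓ t)
        integral_mul_eq := fun t => hker _ hk _ (hℓ t) }
  have hint (k : ℕ) (hk : k ∈ Icc 1 d) :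
      Integrable (fun ω => zfeat g a T Ppaths βP k ω * zfeat g a T Qpaths βQ k ω) P :=
    ((memLp_top_zfeat (hlayer k hk).memLp_top a Qpaths βQ).mul
      (memLp_top_zfeat (hlayer k hk).memLp_top a Ppaths βP)).integrable le_top
  rw [integral_const_mul, integral_finsetSum _ hint,
    sum_congr rfl fun k hk => (hlayer k hk).integral_zfeat_mul_zfeat a Ppaths Qpaths βP βQ,
    sum_const, Nat.card_Icc, Nat.add_sub_cancel, nsmul_eq_mul]
  field_simp

theorem stmt14 {Ω X : Type*} [MeasurableSpace Ω] (P : Measure Ω) [IsProbabilityMeasure P]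
    (T d : ℕ) (hT : 1 ≤ T) (hd : 1 ≤ d)
    (g : ℕ → ℕ → Ω → X → ℝ) (κ : X → X → ℝ)
    (hmeas : ∀ k ∈ Finset.Icc 1 d, ∀ ℓ ∈ Finset.Icc 1 T, ∀ x : X,
      Measurable fun ω => g k ℓ ω x)
    (hindep : iIndepFun
      (fun i : Fin d × Fin T => g (i.1.1 + 1) (i.2.1 + 1)) P)
    (hbdd : ∀ k ∈ Finset.Icc 1 d, ∀ ℓ ∈ Finset.Icc 1 T, ∀ x : X,
      ∃ C : ℝ, ∀ ω, |g k ℓ ω x| ≤ C)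
    (hmean : ∀ k ∈ Finset.Icc 1 d, ∀ ℓ ∈ Finset.Icc 1 T, ∀ x : X,
      ∫ ω, g k ℓ ω x ∂P = 0)
    (hker : ∀ k ∈ Finset.Icc 1 d, ∀ ℓ ∈ Finset.Icc 1 T, ∀ x x' : X,
      ∫ ω, g k ℓ ω x * g k ℓ ω x' ∂P = κ x x')
    (Ppaths Qpaths : (L : ℕ) → Finset (Fin L → X))
    (βP βQ : (L : ℕ) → (Fin L → X) → ℝ) (a : ℕ → ℝ) :
    ∫ ω, (1 / (d : ℝ)) * ∑ k ∈ Finset.Icc 1 d,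
        zfeat g a T Ppaths βP k ω * zfeat g a T Qpaths βQ k ω ∂P =
      ∑ L ∈ Finset.Icc 1 T, a L ^ 2 *
        ∑ p ∈ Ppaths L, ∑ q ∈ Qpaths L,
          (∏ i : Fin L, κ (p i) (q i)) * βP L p * βQ L q :=
  stmt14_general P T d hd g κ hmeas hindep hbdd hmean hker Ppaths Qpaths βP βQ a
end
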